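/- arXiv:1902.07478 — 2 statements merged into one kernel-verified Lean document; each statement's English description precedes it below -/
import Mathlib

section
/- For every real s, every γ with 0 ≤ γ ≤ 1, every r ∈ ℝ and every coefficient sequence f with ‖f‖_{r+2γ} < ∞, one has ‖e^{is∂ₓ²} f − f‖_r ≤ 2^{1−γ} |s|^γ ‖f‖_{r+2γ}; equivalently, Σ_{k∈ℤ}(1+k²)^r |e^{−isk²} − 1|² |f̂_k|² ≤ (2^{1−γ}|s|^γ)² Σ_{k∈ℤ}(1+k²)^{r+2γ} |f̂_k|². -/
/-! Interpolating between `‖e^{iθ} - 1‖ ≤ 2` and `‖e^{iθ} - 1‖ ≤ |θ|` gives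
`‖e^{iθ} - 1‖ ≤ 2^{1-γ} |θ|^γ`; with `θ = -s k²` and `k² ≤ 1 + k²` this bounds each Fourier mode
of the left-hand side by the corresponding mode on the right. -/

open Complex

lemma min_le_rpow_mul_rpow {a x γ : ℝ} (ha : 0 ≤ a) (hx : 0 ≤ x) (hγ0 : 0 ≤ γ) (hγ1 : γ ≤ 1) :
    min a x ≤ a ^ (1 - γ) * x ^ γ := by
  have hm : 0 ≤ min a x := le_min ha hx
  calc min a x = min a x ^ (1 - γ) * min a x ^ γ := by
        rw [← Real.rpow_add_of_nonneg hm (sub_nonneg.2 hγ1) hγ0]; simp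
    _ ≤ a ^ (1 - γ) * x ^ γ := by
        gcongr
        · exact min_le_left a x
        · exact min_le_right a x

lemma norm_exp_I_mul_ofReal_sub_one_le_rpow (θ : ℝ) {γ : ℝ} (hγ0 : 0 ≤ γ) (hγ1 : γ ≤ 1) :
    ‖exp (I * θ) - 1‖ ≤ 2 ^ (1 - γ) * |θ| ^ γ := by
  have hle_two : ‖exp (I * θ) - 1‖ ≤ 2 := by
    simpa [norm_exp_I_mul_ofReal, one_add_one_eq_two] using norm_sub_le (exp (I * θ)) 1
  have hle_abs : ‖exp (I * θ) - 1‖ ≤ |θ| := Real.norm_exp_I_mul_ofReal_sub_one_le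
  exact (le_min hle_two hle_abs).trans
    (min_le_rpow_mul_rpow zero_le_two (abs_nonneg θ) hγ0 hγ1)

lemma norm_exp_neg_I_mul_mul_sq_sub_one_le (s k : ℝ) {γ : ℝ} (hγ0 : 0 ≤ γ) (hγ1 : γ ≤ 1) :
    ‖exp (-I * s * (k : ℂ) ^ 2) - 1‖ ≤ 2 ^ (1 - γ) * |s| ^ γ * (1 + k ^ 2) ^ γ := by
  have harg : -I * s * (k : ℂ) ^ 2 = I * ((-(s * k ^ 2) : ℝ) : ℂ) := by push_cast; ring
  have hsymbol : |-(s * k ^ 2)| ^ γ ≤ |s| ^ γ * (1 + k ^ 2) ^ γ := by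
    rw [abs_neg, abs_mul, abs_of_nonneg (sq_nonneg k), Real.mul_rpow (abs_nonneg s) (sq_nonneg k)]
    gcongr
    linarith
  calc ‖exp (-I * s * (k : ℂ) ^ 2) - 1‖ ≤ 2 ^ (1 - γ) * |-(s * k ^ 2)| ^ γ := by
        rw [harg]; exact norm_exp_I_mul_ofReal_sub_one_le_rpow _ hγ0 hγ1
    _ ≤ 2 ^ (1 - γ) * (|s| ^ γ * (1 + k ^ 2) ^ γ) := by gcongr
    _ = 2 ^ (1 - γ) * |s| ^ γ * (1 + k ^ 2) ^ γ := by ring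

lemma weighted_norm_exp_neg_I_mul_mul_sq_sub_one_le (s k r : ℝ) {γ : ℝ} (hγ0 : 0 ≤ γ)
    (hγ1 : γ ≤ 1) (z : ℂ) :
    (1 + k ^ 2) ^ r * ‖exp (-I * s * (k : ℂ) ^ 2) - 1‖ ^ 2 * ‖z‖ ^ 2
      ≤ (2 ^ (1 - γ) * |s| ^ γ) ^ 2 * ((1 + k ^ 2) ^ (r + 2 * γ) * ‖z‖ ^ 2) := by
  have hbase : 0 < 1 + k ^ 2 := by positivity
  calc (1 + k ^ 2) ^ r * ‖exp (-I * s * (k : ℂ) ^ 2) - 1‖ ^ 2 * ‖z‖ ^ 2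
      ≤ (1 + k ^ 2) ^ r * (2 ^ (1 - γ) * |s| ^ γ * (1 + k ^ 2) ^ γ) ^ 2 * ‖z‖ ^ 2 := by
        gcongr; exact norm_exp_neg_I_mul_mul_sq_sub_one_le s k hγ0 hγ1
    _ = (2 ^ (1 - γ) * |s| ^ γ) ^ 2 * ((1 + k ^ 2) ^ (r + 2 * γ) * ‖z‖ ^ 2) := by
        rw [Real.rpow_add hbase, mul_comm 2 γ, Real.rpow_mul hbase.le, Real.rpow_two]; ring

theorem exp_is_laplacian_sub_one_bound (s γ r : ℝ) (hγ0 : 0 ≤ γ) (hγ1 : γ ≤ 1) (f : ℤ → ℂ)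
    (hf : Summable fun k : ℤ => (1 + (k : ℝ) ^ 2) ^ (r + 2 * γ) * ‖f k‖ ^ 2) :
    ∑' k : ℤ, (1 + (k : ℝ) ^ 2) ^ r *
        ‖Complex.exp (-Complex.I * s * (k : ℂ) ^ 2) - 1‖ ^ 2 * ‖f k‖ ^ 2
      ≤ (2 ^ (1 - γ) * |s| ^ γ) ^ 2 *
        ∑' k : ℤ, (1 + (k : ℝ) ^ 2) ^ (r + 2 * γ) * ‖f k‖ ^ 2 := by
  have htermwise (k : ℤ) := weighted_norm_exp_neg_I_mul_mul_sq_sub_one_le s k r hγ0 hγ1 (f k)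
  push_cast at htermwise
  have hdom := hf.mul_left ((2 ^ (1 - γ) * |s| ^ γ) ^ 2)
  rw [← tsum_mul_left]
  exact (hdom.of_nonneg_of_le (fun k => by positivity) htermwise).tsum_le_tsum htermwise hdom
end

section
/- Let r > 1/2, c > 0, and let D_r > 0 be a constant such that ‖fg‖_r ≤ D_r ‖f‖_r ‖g‖_r for all f, g ∈ H^r. Define the first-order scheme Φ^τ(f) = e^{iτ⟨∂ₓ²⟩_c} f − (icτ/2)⟨∂ₓ²⟩_c^{-1} e^{iτ⟨∂ₓ²⟩_c} f − (icτ/2)⟨∂ₓ²⟩_c^{-1} e^{iτ⟨∂ₓ²⟩_c} ψ₁(2iτ∂ₓ²) f̄ − (i/4) ∂ₓ² ⟨∂ₓ²⟩_c^{-1} e^{iτ⟨∂ₓ²⟩_c} [I₁^τ(f) + 2 I₂^τ(f) + I₃^τ(f)], where I₁^τ(f) = ∫₀^τ e^{is∂ₓ²}((e^{−is∂ₓ²} f)²) ds, I₂^τ(f) = ∫₀^τ e^{is∂ₓ²}((e^{−is∂ₓ²} f)(conj(e^{−is∂ₓ²} f))) ds, and I₃^τ(f) = τ ψ₁(2iτ∂ₓ²)((f̄)²).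 Then for every τ ≥ 0 and all f, g ∈ H^r one has ‖Φ^τ(f) − Φ^τ(g)‖_r ≤ (1 + Mτ) ‖f − g‖_r, where M = √c + D_r(‖f‖_r + ‖g‖_r). -/
/-- Sobolev norm `‖f‖_m` of a Fourier coefficient sequence. -/
noncomputable def sobNorm (m : ℝ) (f : ℤ → ℂ) : ℝ :=
  Real.sqrt (∑' k : ℤ, (1 + (k : ℝ) ^ 2) ^ m * ‖f k‖ ^ 2)

/-- Membership in `H^m`. -/
def inH (m : ℝ) (f : ℤ → ℂ) : Prop :=
  Summable fun k : ℤ => (1 + (k : ℝ) ^ 2) ^ m * ‖f k‖ ^ 2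

/-- Convolution of coefficient sequences (Fourier coefficients of the product). -/
noncomputable def conv (f g : ℤ → ℂ) : ℤ → ℂ := fun l => ∑' k : ℤ, f k * g (l - k)

/-- Fourier coefficients of the complex conjugate `f̄`. -/
noncomputable def conjSeq (f : ℤ → ℂ) : ℤ → ℂ := fun k => starRingEnd ℂ (f (-k))

/-- `ψ₁(z) = ∫₀¹ e^{zs} ds` -/
noncomputable def psi1 (z : ℂ) : ℂ := ∫ s in (0:ℝ)..1, Complex.exp (z * s)

/-- Fourier coefficients of `I₁^τ(f) = ∫₀^τ e^{is∂ₓ²}((e^{-is∂ₓ²}f)²) ds`. -/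
noncomputable def I1 (τ : ℝ) (f : ℤ → ℂ) : ℤ → ℂ := fun l =>
  ∑' k : ℤ, f k * f (l - k) * ∫ s in (0:ℝ)..τ, Complex.exp (-2 * Complex.I * s * k * (l - k))

/-- Fourier coefficients of `I₂^τ(f) = ∫₀^τ e^{is∂ₓ²}((e^{-is∂ₓ²}f)(conj(e^{-is∂ₓ²}f))) ds`. -/
noncomputable def I2 (τ : ℝ) (f : ℤ → ℂ) : ℤ → ℂ := fun l =>
  ∑' m : ℤ, f (l + m) * starRingEnd ℂ (f m) *
    ∫ s in (0:ℝ)..τ, Complex.exp (2 * Complex.I * s * l * m)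

/-- Fourier coefficients of `I₃^τ(f) = τ ψ₁(2iτ∂ₓ²)((f̄)²)`. -/
noncomputable def I3 (τ : ℝ) (f : ℤ → ℂ) : ℤ → ℂ := fun l =>
  (τ : ℂ) * psi1 (-2 * Complex.I * τ * (l : ℂ) ^ 2) * conv (conjSeq f) (conjSeq f) l

/-- The first-order exponential-type integrator
`Φ^τ(f) = e^{iτ⟨∂ₓ²⟩_c}f − (icτ/2)⟨∂ₓ²⟩_c⁻¹e^{iτ⟨∂ₓ²⟩_c}f
  − (icτ/2)⟨∂ₓ²⟩_c⁻¹e^{iτ⟨∂ₓ²⟩_c}ψ₁(2iτ∂ₓ²)f̄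
  − (i/4)∂ₓ²⟨∂ₓ²⟩_c⁻¹e^{iτ⟨∂ₓ²⟩_c}[I₁^τ(f) + 2I₂^τ(f) + I₃^τ(f)]`, in Fourier coefficients. -/
noncomputable def Phi (c τ : ℝ) (f : ℤ → ℂ) : ℤ → ℂ := fun k =>
  Complex.exp (Complex.I * τ * ((Real.sqrt (c + (k : ℝ) ^ 2 + (k : ℝ) ^ 4) : ℝ) : ℂ)) * f k
  - (Complex.I * c * τ / 2) * (1 / ((Real.sqrt (c + (k : ℝ) ^ 2 + (k : ℝ) ^ 4) : ℝ) : ℂ)) *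
      Complex.exp (Complex.I * τ * ((Real.sqrt (c + (k : ℝ) ^ 2 + (k : ℝ) ^ 4) : ℝ) : ℂ)) * f k
  - (Complex.I * c * τ / 2) * (1 / ((Real.sqrt (c + (k : ℝ) ^ 2 + (k : ℝ) ^ 4) : ℝ) : ℂ)) *
      Complex.exp (Complex.I * τ * ((Real.sqrt (c + (k : ℝ) ^ 2 + (k : ℝ) ^ 4) : ℝ) : ℂ)) *
      psi1 (-2 * Complex.I * τ * (k : ℂ) ^ 2) * conjSeq f k
  - (Complex.I / 4) * ((-(k : ℝ) ^ 2 : ℝ) : ℂ) *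
      (1 / ((Real.sqrt (c + (k : ℝ) ^ 2 + (k : ℝ) ^ 4) : ℝ) : ℂ)) *
      Complex.exp (Complex.I * τ * ((Real.sqrt (c + (k : ℝ) ^ 2 + (k : ℝ) ^ 4) : ℝ) : ℂ)) *
      (I1 τ f k + 2 * I2 τ f k + I3 τ f k)

/-!
Frequency by frequency, `Φ^τ(f) - Φ^τ(g)` is a combination of `f - g`, of its conjugate reflection
and of the differences `I_j^τ(f) - I_j^τ(g)`, with multipliers of modulus at most `1`, `√c τ / 2`
(as `⟨k⟩_c ≥ √c`) and `1 / 4` (as `k² ≤ ⟨k⟩_c`). Each `I_j` is a convolution with an oscillatory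
weight of modulus at most `τ`, so `I_j(f) - I_j(g) = B(f - g, f) + B(g, f - g)` is dominated
pointwise by `τ` times convolutions of moduli, whose `H^r` norms the algebra property bounds by
`D_r ‖f - g‖_r (‖f‖_r + ‖g‖_r)`. Norms are taken in `[0, ∞]`, where the triangle inequality and
monotone convergence need no summability hypotheses.
-/

open scoped ENNReal

lemma Complex.enorm_ofReal_of_nonneg {x : ℝ} (hx : 0 ≤ x) : ‖(x : ℂ)‖ₑ = ENNReal.ofReal x := by
  rw [← ofReal_norm, Complex.norm_real, Real.norm_of_nonneg hx]

lemma ENNReal.tsum_iSup_of_monotone {α ι : Type*} [Preorder ι] [IsDirectedOrder ι]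
    {f : ι → α → ℝ≥0∞} (hf : Monotone f) : ∑' a, ⨆ i, f i a = ⨆ i, ∑' a, f i a := by
  simp_rw [ENNReal.tsum_eq_iSup_sum, ENNReal.finsetSum_iSup_of_monotone fun a _ _ h => hf h a]
  exact iSup_comm

lemma sobNorm_nonneg (r : ℝ) (f : ℤ → ℂ) : 0 ≤ sobNorm r f := Real.sqrt_nonneg _

lemma inH.mono {r s : ℝ} {f : ℤ → ℂ} (hf : inH s f) (hrs : r ≤ s) : inH r f :=
  hf.of_nonneg_of_le (fun k => by positivity) fun k => by
    gcongr
    exact le_add_of_nonneg_right (sq_nonneg _)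

noncomputable def sobWeight (r : ℝ) (k : ℤ) : ℝ≥0∞ := ENNReal.ofReal ((1 + (k : ℝ) ^ 2) ^ (r / 2))

noncomputable def sobENorm (r : ℝ) (a : ℤ → ℝ≥0∞) : ℝ≥0∞ :=
  (∑' k, (sobWeight r k * a k) ^ (2 : ℝ)) ^ (1 / 2 : ℝ)

section sobENorm

variable {r : ℝ}

lemma sobWeight_mul_enorm_rpow_two (f : ℤ → ℂ) (k : ℤ) :
    (sobWeight r k * ‖f k‖ₑ) ^ (2 : ℝ) = ENNReal.ofReal ((1 + (k : ℝ) ^ 2) ^ r * ‖f k‖ ^ 2) := by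
  have hbase : (0 : ℝ) ≤ 1 + (k : ℝ) ^ 2 := by positivity
  rw [sobWeight, ← ofReal_norm, ← ENNReal.ofReal_mul (by positivity),
    ENNReal.ofReal_rpow_of_nonneg (by positivity) zero_le_two, Real.mul_rpow (by positivity)
      (norm_nonneg _), ← Real.rpow_mul hbase, div_mul_cancel₀ r two_ne_zero]
  norm_cast

lemma sobENorm_enorm_eq_ofReal {f : ℤ → ℂ} (hf : inH r f) :
    sobENorm r (‖f ·‖ₑ) = ENNReal.ofReal (sobNorm r f) := by
  simp_rw [sobENorm, sobWeight_mul_enorm_rpow_two, sobNorm, Real.sqrt_eq_rpow,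
    ← ENNReal.ofReal_tsum_of_nonneg (fun k => by positivity) hf]
  rw [ENNReal.ofReal_rpow_of_nonneg (tsum_nonneg fun k => by positivity) (by norm_num)]

lemma inH_iff_sobENorm_ne_top {f : ℤ → ℂ} : inH r f ↔ sobENorm r (‖f ·‖ₑ) ≠ ∞ := by
  refine ⟨fun hf => by simp [sobENorm_enorm_eq_ofReal hf], fun h => ?_⟩
  have hsum : ∑' k, (sobWeight r k * ‖f k‖ₑ) ^ (2 : ℝ) ≠ ∞ := by
    simpa [sobENorm, ENNReal.rpow_eq_top_iff] using h
  refine (ENNReal.summable_toReal hsum).congr fun k => ?_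
  rw [sobWeight_mul_enorm_rpow_two, ENNReal.toReal_ofReal (by positivity)]

lemma sobNorm_eq_toReal_sobENorm (f : ℤ → ℂ) : sobNorm r f = (sobENorm r (‖f ·‖ₑ)).toReal := by
  by_cases hf : inH r f
  · rw [sobENorm_enorm_eq_ofReal hf, ENNReal.toReal_ofReal (sobNorm_nonneg r f)]
  · rw [of_not_not (mt inH_iff_sobENorm_ne_top.2 hf), sobNorm, tsum_eq_zero_of_not_summable hf]
    simp

lemma sobENorm_mono {a b : ℤ → ℝ≥0∞} (h : ∀ k, a k ≤ b k) : sobENorm r a ≤ sobENorm r b := by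
  unfold sobENorm
  gcongr with k
  exact h k

lemma sobENorm_add_le (a b : ℤ → ℝ≥0∞) :
    sobENorm r (fun k => a k + b k) ≤ sobENorm r a + sobENorm r b := by
  simp only [sobENorm, mul_add, ← MeasureTheory.lintegral_count]
  exact ENNReal.lintegral_Lp_add_le .of_discrete .of_discrete one_le_two

lemma sobENorm_const_mul (C : ℝ≥0∞) (a : ℤ → ℝ≥0∞) :
    sobENorm r (fun k => C * a k) = C * sobENorm r a := by
  simp only [sobENorm, mul_left_comm _ C, ENNReal.mul_rpow_of_nonneg _ _ zero_le_two,
    ENNReal.tsum_mul_left, ENNReal.mul_rpow_of_nonneg _ _ one_half_pos.le, ← ENNReal.rpow_mul]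
  norm_num

lemma sobENorm_comp_neg (a : ℤ → ℝ≥0∞) : sobENorm r (fun k => a (-k)) = sobENorm r a := by
  unfold sobENorm
  rw [← (Equiv.neg ℤ).tsum_eq]
  simp [sobWeight]

lemma sobENorm_iSup {a : ℕ → ℤ → ℝ≥0∞} (ha : Monotone a) :
    sobENorm r (fun k => ⨆ n, a n k) = ⨆ n, sobENorm r (a n) := by
  have hpow (p : ℝ) (hp : 0 < p) (x : ℕ → ℝ≥0∞) : (⨆ n, x n) ^ p = ⨆ n, x n ^ p :=
    (ENNReal.orderIsoRpow p hp).map_iSup x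
  simp only [sobENorm, ENNReal.mul_iSup, hpow 2 two_pos]
  rw [ENNReal.tsum_iSup_of_monotone, hpow _ one_half_pos]
  intro m n hmn k
  dsimp only
  gcongr
  exact ha hmn k

lemma inH.sub {f g : ℤ → ℂ} (hf : inH r f) (hg : inH r g) : inH r (fun k => f k - g k) := by
  rw [inH_iff_sobENorm_ne_top] at *
  refine ne_top_of_le_ne_top (ENNReal.add_ne_top.2 ⟨hf, hg⟩)
    ((sobENorm_mono fun k => enorm_sub_le).trans (sobENorm_add_le _ _))

lemma sobENorm_enorm_conjSeq (f : ℤ → ℂ) : sobENorm r (‖conjSeq f ·‖ₑ) = sobENorm r (‖f ·‖ₑ) := by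
  simpa [conjSeq] using sobENorm_comp_neg (r := r) (‖f ·‖ₑ)

lemma inH.conjSeq {f : ℤ → ℂ} (hf : inH r f) : inH r (conjSeq f) := by
  rwa [inH_iff_sobENorm_ne_top, sobENorm_enorm_conjSeq, ← inH_iff_sobENorm_ne_top]

lemma sobNorm_conjSeq (f : ℤ → ℂ) : sobNorm r (conjSeq f) = sobNorm r f := by
  rw [sobNorm_eq_toReal_sobENorm, sobENorm_enorm_conjSeq, ← sobNorm_eq_toReal_sobENorm]

lemma sobNorm_le_of_enorm_le {f g : ℤ → ℂ} (hg : inH r g) (h : ∀ k, ‖f k‖ₑ ≤ ‖g k‖ₑ) :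
    sobNorm r f ≤ sobNorm r g := by
  rw [sobNorm_eq_toReal_sobENorm, sobNorm_eq_toReal_sobENorm]
  exact ENNReal.toReal_mono (inH_iff_sobENorm_ne_top.1 hg) (sobENorm_mono h)

end sobENorm

lemma inH_of_eq_zero_of_lt_natAbs {r : ℝ} {f : ℤ → ℂ} (N : ℕ)
    (hf : ∀ k : ℤ, N < k.natAbs → f k = 0) : inH r f :=
  summable_of_ne_finset_zero (s := Finset.Icc (-(N : ℤ)) N) fun k hk => by
    rw [hf k (by rw [Finset.mem_Icc] at hk; omega)]
    simp

noncomputable def econv (a b : ℤ → ℝ≥0∞) (l : ℤ) : ℝ≥0∞ := ∑' k, a k * b (l - k)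

lemma econv_mono {a a' b b' : ℤ → ℝ≥0∞} (ha : ∀ k, a k ≤ a' k) (hb : ∀ k, b k ≤ b' k) (l : ℤ) :
    econv a b l ≤ econv a' b' l :=
  ENNReal.tsum_le_tsum fun k => mul_le_mul' (ha k) (hb _)

lemma summable_norm_mul_norm_sub {a b : ℤ → ℂ} (ha : inH 0 a) (hb : inH 0 b) (l : ℤ) :
    Summable fun k => ‖a k‖ * ‖b (l - k)‖ := by
  have hsq {f : ℤ → ℂ} (hf : inH 0 f) : Summable fun k => ‖f k‖ ^ 2 := by simpa [inH] using hf
  have hb' : Summable fun k => ‖b (l - k)‖ ^ 2 := (Equiv.subLeft l).summable_iff.2 (hsq hb)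
  refine ((hsq ha).add hb').of_nonneg_of_le (fun k => by positivity) fun k => ?_
  nlinarith [two_mul_le_add_sq ‖a k‖ ‖b (l - k)‖,
    mul_nonneg (norm_nonneg (a k)) (norm_nonneg (b (l - k)))]

lemma enorm_tsum_sub_tsum_le {a b a' b' w : ℤ → ℂ} {C : ℝ} (ha : inH 0 a) (hb : inH 0 b)
    (ha' : inH 0 a') (hb' : inH 0 b') (hw : ∀ k, ‖w k‖ ≤ C) (l : ℤ) :
    ‖∑' k, a k * b (l - k) * w k - ∑' k, a' k * b' (l - k) * w k‖ₑ
      ≤ ENNReal.ofReal C * (econv (fun k => ‖a k - a' k‖ₑ) (‖b ·‖ₑ) l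
        + econv (‖a' ·‖ₑ) (fun k => ‖b k - b' k‖ₑ) l) := by
  have hsum {a b : ℤ → ℂ} (ha : inH 0 a) (hb : inH 0 b) :
      Summable fun k => a k * b (l - k) * w k :=
    ((summable_norm_mul_norm_sub ha hb l).mul_right C).of_norm_bounded fun k => by
      rw [norm_mul, norm_mul]
      gcongr
      exact hw k
  rw [← (hsum ha hb).tsum_sub (hsum ha' hb'), econv, econv, ← ENNReal.tsum_add,
    ← ENNReal.tsum_mul_left]
  refine enorm_tsum_le_tsum_enorm.trans (ENNReal.tsum_le_tsum fun k => ?_)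
  rw [show a k * b (l - k) * w k - a' k * b' (l - k) * w k
      = w k * ((a k - a' k) * b (l - k) + a' k * (b (l - k) - b' (l - k))) by ring, enorm_mul]
  gcongr
  · rw [← ofReal_norm]
    exact ENNReal.ofReal_le_ofReal (hw k)
  · exact (enorm_add_le _ _).trans_eq (by rw [enorm_mul, enorm_mul])

lemma norm_integral_exp_le {τ : ℝ} (hτ : 0 ≤ τ) {φ : ℝ → ℂ} (hφ : ∀ s, (φ s).re = 0) :
    ‖∫ s in (0 : ℝ)..τ, Complex.exp (φ s)‖ ≤ τ := by
  simpa [abs_of_nonneg hτ] using intervalIntegral.norm_integral_le_of_norm_le_const (C := 1)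
    (a := 0) (b := τ) (f := fun s => Complex.exp (φ s)) fun s _ => by simp [Complex.norm_exp, hφ]

lemma norm_psi1_le_one {z : ℂ} (hz : z.re = 0) : ‖psi1 z‖ ≤ 1 :=
  norm_integral_exp_le zero_le_one fun s => by simp [hz]

lemma conjSeq_sub (f g : ℤ → ℂ) (k : ℤ) :
    conjSeq f k - conjSeq g k = conjSeq (fun k => f k - g k) k := by
  simp [conjSeq]

lemma I2_eq (τ : ℝ) (f : ℤ → ℂ) (l : ℤ) :
    I2 τ f l = ∑' k, f k * conjSeq f (l - k) *
      ∫ s in (0 : ℝ)..τ, Complex.exp (2 * Complex.I * s * l * (k - l)) := by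
  rw [I2, ← (Equiv.subRight l).tsum_eq]
  simp [conjSeq]

section differences

variable {τ : ℝ} (hτ : 0 ≤ τ) {f g : ℤ → ℂ} (hf : inH 0 f) (hg : inH 0 g) (l : ℤ)
include hτ hf hg

lemma enorm_I1_sub_le :
    ‖I1 τ f l - I1 τ g l‖ₑ ≤ ENNReal.ofReal τ * (econv (fun k => ‖f k - g k‖ₑ) (‖f ·‖ₑ) l
      + econv (‖g ·‖ₑ) (fun k => ‖f k - g k‖ₑ) l) :=
  enorm_tsum_sub_tsum_le hf hf hg hg (fun k => norm_integral_exp_le hτ fun s => by simp) l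

lemma enorm_I2_sub_le :
    ‖I2 τ f l - I2 τ g l‖ₑ ≤ ENNReal.ofReal τ * (econv (fun k => ‖f k - g k‖ₑ) (‖conjSeq f ·‖ₑ) l
      + econv (‖g ·‖ₑ) (‖conjSeq (fun k => f k - g k) ·‖ₑ) l) := by
  rw [I2_eq, I2_eq]
  simpa only [conjSeq_sub] using enorm_tsum_sub_tsum_le hf hf.conjSeq hg hg.conjSeq
    (fun k => norm_integral_exp_le hτ fun s => by simp) l

lemma enorm_I3_sub_le :
    ‖I3 τ f l - I3 τ g l‖ₑ ≤ ENNReal.ofReal τ *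
      (econv (‖conjSeq (fun k => f k - g k) ·‖ₑ) (‖conjSeq f ·‖ₑ) l
        + econv (‖conjSeq g ·‖ₑ) (‖conjSeq (fun k => f k - g k) ·‖ₑ) l) := by
  have hconv := enorm_tsum_sub_tsum_le hf.conjSeq hf.conjSeq hg.conjSeq hg.conjSeq
    (w := 1) (C := 1) (fun _ => by simp) l
  simp only [Pi.one_apply, mul_one, ENNReal.ofReal_one, one_mul, conjSeq_sub] at hconv
  rw [I3, I3, ← mul_sub, enorm_mul, enorm_mul, Complex.enorm_ofReal_of_nonneg hτ]
  calc _ ≤ ENNReal.ofReal τ * 1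
        * ‖conv (conjSeq f) (conjSeq f) l - conv (conjSeq g) (conjSeq g) l‖ₑ := by
        gcongr
        rw [← ofReal_norm]
        exact ENNReal.ofReal_le_one.2 (norm_psi1_le_one (by simp [sq]))
    _ ≤ _ := by
        rw [mul_one]
        gcongr
        exact hconv

end differences

lemma enorm_conv_ofReal {x y : ℤ → ℝ} (hx : ∀ k, 0 ≤ x k) (hy : ∀ k, 0 ≤ y k) {l : ℤ}
    (hxy : Summable fun k => x k * y (l - k)) :
    ‖conv (fun k => (x k : ℂ)) (fun k => (y k : ℂ)) l‖ₑ
      = econv (fun k => ENNReal.ofReal (x k)) (fun k => ENNReal.ofReal (y k)) l := by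
  have hconv : conv (fun k => (x k : ℂ)) (fun k => (y k : ℂ)) l
      = ((∑' k, x k * y (l - k) : ℝ) : ℂ) := by
    simp [conv, Complex.ofReal_tsum]
  rw [hconv, Complex.enorm_ofReal_of_nonneg (tsum_nonneg fun k => mul_nonneg (hx k) (hy _)),
    ENNReal.ofReal_tsum_of_nonneg (fun k => mul_nonneg (hx k) (hy _)) hxy]
  simp only [econv, ENNReal.ofReal_mul (hx _)]

noncomputable def truncNorm (N : ℕ) (f : ℤ → ℂ) (k : ℤ) : ℝ := if k.natAbs ≤ N then ‖f k‖ else 0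

section truncNorm

variable {N : ℕ} {f : ℤ → ℂ} {k : ℤ}

lemma truncNorm_nonneg : 0 ≤ truncNorm N f k := by
  unfold truncNorm
  split_ifs <;> positivity

lemma truncNorm_le_norm : truncNorm N f k ≤ ‖f k‖ := by
  unfold truncNorm
  split_ifs <;> simp

lemma truncNorm_mono {M : ℕ} (h : N ≤ M) : truncNorm N f k ≤ truncNorm M f k := by
  unfold truncNorm
  split_ifs <;> first | rfl | positivity | omega

lemma truncNorm_of_lt_natAbs (hk : N < k.natAbs) : truncNorm N f k = 0 := by
  simp [truncNorm, hk.not_ge]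

lemma enorm_truncNorm_le : ‖(truncNorm N f k : ℂ)‖ₑ ≤ ‖f k‖ₑ := by
  rw [Complex.enorm_ofReal_of_nonneg truncNorm_nonneg, ← ofReal_norm]
  exact ENNReal.ofReal_le_ofReal truncNorm_le_norm

end truncNorm

lemma iSup_econv_truncNorm (f g : ℤ → ℂ) (l : ℤ) :
    ⨆ N, econv (fun k => ENNReal.ofReal (truncNorm N f k))
      (fun k => ENNReal.ofReal (truncNorm N g k)) l = econv (‖f ·‖ₑ) (‖g ·‖ₑ) l := by
  simp only [econv]
  rw [← ENNReal.tsum_iSup_of_monotone fun N M h k => by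
    dsimp only
    gcongr <;> exact truncNorm_mono h]
  refine tsum_congr fun k => le_antisymm (iSup_le fun N => ?_) ?_
  · rw [← ofReal_norm, ← ofReal_norm]
    gcongr <;> exact truncNorm_le_norm
  · refine le_iSup_of_le (max k.natAbs (l - k).natAbs) ?_
    simp [truncNorm]

section convolution

variable {r Dr : ℝ} (hDr : 0 ≤ Dr)
  (hbil : ∀ f g : ℤ → ℂ, inH r f → inH r g → sobNorm r (conv f g) ≤ Dr * sobNorm r f * sobNorm r g)
include hDr hbil

/- `hbil` says nothing about products not known to lie in `H^r` (there `sobNorm` is `0`), so it is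
applied to the finitely supported truncations of `|f|` and `|g|`, and `sobENorm_iSup` passes to the
limit. -/
lemma sobENorm_econv_truncNorm_le {f g : ℤ → ℂ} (hf : inH r f) (hg : inH r g) (N : ℕ) :
    sobENorm r (econv (fun k => ENNReal.ofReal (truncNorm N f k))
      (fun k => ENNReal.ofReal (truncNorm N g k)))
      ≤ ENNReal.ofReal (Dr * sobNorm r f * sobNorm r g) := by
  set F : ℤ → ℂ := fun k => (truncNorm N f k : ℂ)
  set G : ℤ → ℂ := fun k => (truncNorm N g k : ℂ)
  have hF : inH r F :=
    inH_of_eq_zero_of_lt_natAbs N fun k hk => by simp [F, truncNorm_of_lt_natAbs hk]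
  have hG : inH r G :=
    inH_of_eq_zero_of_lt_natAbs N fun k hk => by simp [G, truncNorm_of_lt_natAbs hk]
  have hFG : inH r (conv F G) := inH_of_eq_zero_of_lt_natAbs (2 * N) fun l hl => by
    refine (tsum_congr fun k => ?_).trans tsum_zero
    by_cases hk : N < k.natAbs
    · simp [F, truncNorm_of_lt_natAbs hk]
    · simp [G, truncNorm_of_lt_natAbs (show N < (l - k).natAbs by omega)]
  have hsum (l : ℤ) : Summable fun k => truncNorm N f k * truncNorm N g (l - k) :=
    summable_of_ne_finset_zero (s := Finset.Icc (-(N : ℤ)) N) fun k hk => by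
      rw [truncNorm_of_lt_natAbs (by rw [Finset.mem_Icc] at hk; omega), zero_mul]
  calc _ = sobENorm r (‖conv F G ·‖ₑ) := by
        congr 1
        funext l
        exact (enorm_conv_ofReal (x := truncNorm N f) (y := truncNorm N g)
          (fun _ => truncNorm_nonneg) (fun _ => truncNorm_nonneg) (hsum l)).symm
    _ = ENNReal.ofReal (sobNorm r (conv F G)) := sobENorm_enorm_eq_ofReal hFG
    _ ≤ ENNReal.ofReal (Dr * sobNorm r F * sobNorm r G) := ENNReal.ofReal_le_ofReal (hbil F G hF hG)
    _ ≤ ENNReal.ofReal (Dr * sobNorm r f * sobNorm r g) := by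
        have hFf : sobNorm r F ≤ sobNorm r f :=
          sobNorm_le_of_enorm_le hf fun _ => enorm_truncNorm_le
        have hGg : sobNorm r G ≤ sobNorm r g :=
          sobNorm_le_of_enorm_le hg fun _ => enorm_truncNorm_le
        have := sobNorm_nonneg r f
        have := sobNorm_nonneg r G
        gcongr

lemma sobENorm_econv_le {f g : ℤ → ℂ} (hf : inH r f) (hg : inH r g) :
    sobENorm r (econv (‖f ·‖ₑ) (‖g ·‖ₑ)) ≤ ENNReal.ofReal (Dr * sobNorm r f * sobNorm r g) := by
  rw [show econv (‖f ·‖ₑ) (‖g ·‖ₑ) = fun l => _ from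
      funext fun l => (iSup_econv_truncNorm f g l).symm,
    sobENorm_iSup fun N M h l => econv_mono (fun k => ?_) (fun k => ?_) l]
  · exact iSup_le (sobENorm_econv_truncNorm_le hDr hbil hf hg)
  all_goals exact ENNReal.ofReal_le_ofReal (truncNorm_mono h)

lemma sobENorm_le_of_le_econv {A : ℤ → ℝ≥0∞} {C : ℝ≥0∞} {a b a' b' : ℤ → ℂ} (ha : inH r a)
    (hb : inH r b) (ha' : inH r a') (hb' : inH r b')
    (hA : ∀ l, A l ≤ C * (econv (‖a ·‖ₑ) (‖b ·‖ₑ) l + econv (‖a' ·‖ₑ) (‖b' ·‖ₑ) l)) :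
    sobENorm r A ≤ C * (ENNReal.ofReal (Dr * sobNorm r a * sobNorm r b)
      + ENNReal.ofReal (Dr * sobNorm r a' * sobNorm r b')) := by
  refine (sobENorm_mono hA).trans ?_
  rw [sobENorm_const_mul]
  gcongr
  exact (sobENorm_add_le _ _).trans
    (add_le_add (sobENorm_econv_le hDr hbil ha hb) (sobENorm_econv_le hDr hbil ha' hb'))

section differences

variable {τ : ℝ} (hτ : 0 ≤ τ) {f g : ℤ → ℂ} (hr : 0 ≤ r) (hf : inH r f) (hg : inH r g)
include hτ hr hf hg

lemma sobENorm_I1_sub_le :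
    sobENorm r (fun l => ‖I1 τ f l - I1 τ g l‖ₑ) ≤ ENNReal.ofReal τ *
      (ENNReal.ofReal (Dr * sobNorm r (fun k => f k - g k) * sobNorm r f)
        + ENNReal.ofReal (Dr * sobNorm r g * sobNorm r (fun k => f k - g k))) :=
  sobENorm_le_of_le_econv hDr hbil (hf.sub hg) hf hg (hf.sub hg)
    (enorm_I1_sub_le hτ (hf.mono hr) (hg.mono hr))

lemma sobENorm_I2_sub_le :
    sobENorm r (fun l => ‖I2 τ f l - I2 τ g l‖ₑ) ≤ ENNReal.ofReal τ *
      (ENNReal.ofReal (Dr * sobNorm r (fun k => f k - g k) * sobNorm r f)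
        + ENNReal.ofReal (Dr * sobNorm r g * sobNorm r (fun k => f k - g k))) := by
  simpa only [sobNorm_conjSeq] using sobENorm_le_of_le_econv hDr hbil (hf.sub hg) hf.conjSeq hg
    (hf.sub hg).conjSeq (enorm_I2_sub_le hτ (hf.mono hr) (hg.mono hr))

lemma sobENorm_I3_sub_le :
    sobENorm r (fun l => ‖I3 τ f l - I3 τ g l‖ₑ) ≤ ENNReal.ofReal τ *
      (ENNReal.ofReal (Dr * sobNorm r (fun k => f k - g k) * sobNorm r f)
        + ENNReal.ofReal (Dr * sobNorm r g * sobNorm r (fun k => f k - g k))) := by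
  simpa only [sobNorm_conjSeq] using sobENorm_le_of_le_econv hDr hbil (hf.sub hg).conjSeq
    hf.conjSeq hg.conjSeq (hf.sub hg).conjSeq (enorm_I3_sub_le hτ (hf.mono hr) (hg.mono hr))

end differences

end convolution

lemma enorm_Phi_sub_le {c τ : ℝ} (hc : 0 < c) (hτ : 0 ≤ τ) (f g : ℤ → ℂ) (k : ℤ) :
    ‖Phi c τ f k - Phi c τ g k‖ₑ ≤ ‖f k - g k‖ₑ
      + ENNReal.ofReal (√c * τ / 2) * (‖f k - g k‖ₑ + ‖conjSeq (fun k => f k - g k) k‖ₑ)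
      + ENNReal.ofReal (1 / 4) * (‖I1 τ f k - I1 τ g k‖ₑ + 2 * ‖I2 τ f k - I2 τ g k‖ₑ
        + ‖I3 τ f k - I3 τ g k‖ₑ) := by
  set x := √(c + (k : ℝ) ^ 2 + (k : ℝ) ^ 4)
  have hx : 0 < x := Real.sqrt_pos.2 (by positivity)
  have hk4 : 0 ≤ (k : ℝ) ^ 4 := by positivity
  have hcx : √c ≤ x := Real.sqrt_le_sqrt (by nlinarith [sq_nonneg (k : ℝ)])
  have hkx : (k : ℝ) ^ 2 ≤ x := (Real.le_sqrt (by positivity) (by positivity)).2 (by nlinarith)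
  set E := Complex.exp (Complex.I * τ * (x : ℂ))
  set m := Complex.I * c * τ / 2 * (1 / (x : ℂ)) * E
  set n := Complex.I / 4 * ((-(k : ℝ) ^ 2 : ℝ) : ℂ) * (1 / (x : ℂ)) * E
  set ψ := psi1 (-2 * Complex.I * τ * (k : ℂ) ^ 2)
  have hE : ‖E‖ = 1 := by simp [E, Complex.norm_exp]
  have hm : ‖m‖ ≤ √c * τ / 2 := by
    have hcx' : c / x ≤ √c := by
      rw [div_le_iff₀ hx]
      calc c = √c * √c := (Real.mul_self_sqrt hc.le).symm
        _ ≤ √c * x := mul_le_mul_of_nonneg_left hcx (Real.sqrt_nonneg c)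
    simp only [m, norm_mul, norm_div, hE, Complex.norm_I, Complex.norm_real, Real.norm_eq_abs,
      abs_of_pos hc, abs_of_nonneg hτ, abs_of_pos hx, norm_one, Complex.norm_ofNat]
    calc 1 * c * τ / 2 * (1 / x) * 1 = c / x * τ / 2 := by ring
      _ ≤ √c * τ / 2 := by gcongr
  have hn : ‖n‖ ≤ 1 / 4 := by
    simp only [n, norm_mul, norm_div, hE, Complex.norm_I, Complex.norm_real, Real.norm_eq_abs,
      abs_of_pos hx, norm_one, abs_neg, Complex.norm_ofNat, abs_of_nonneg (sq_nonneg (k : ℝ))]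
    calc 1 / 4 * (k : ℝ) ^ 2 * (1 / x) * 1 = 1 / 4 * ((k : ℝ) ^ 2 / x) := by ring
      _ ≤ 1 / 4 * 1 := by gcongr; exact div_le_one_of_le₀ hkx hx.le
      _ = 1 / 4 := mul_one _
  have hψ : ‖ψ‖ ≤ 1 := norm_psi1_le_one (by simp [sq])
  have hsplit : Phi c τ f k - Phi c τ g k = E * (f k - g k) - m * (f k - g k)
      - m * ψ * (conjSeq f k - conjSeq g k)
      - n * ((I1 τ f k - I1 τ g k) + 2 * (I2 τ f k - I2 τ g k) + (I3 τ f k - I3 τ g k)) := by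
    simp only [Phi, E, m, n, ψ, x]
    ring
  have hE' : ‖E‖ₑ = 1 := by rw [← ofReal_norm, hE, ENNReal.ofReal_one]
  have hm' : ‖m‖ₑ ≤ ENNReal.ofReal (√c * τ / 2) := by
    rw [← ofReal_norm]
    exact ENNReal.ofReal_le_ofReal hm
  have hn' : ‖n‖ₑ ≤ ENNReal.ofReal (1 / 4) := by
    rw [← ofReal_norm]
    exact ENNReal.ofReal_le_ofReal hn
  have hψ' : ‖ψ‖ₑ ≤ 1 := by
    rw [← ofReal_norm]
    exact ENNReal.ofReal_le_one.2 hψ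
  rw [hsplit, conjSeq_sub]
  calc _ ≤ ‖E * (f k - g k)‖ₑ + ‖m * (f k - g k)‖ₑ + ‖m * ψ * conjSeq (fun k => f k - g k) k‖ₑ
        + ‖n * ((I1 τ f k - I1 τ g k) + 2 * (I2 τ f k - I2 τ g k) + (I3 τ f k - I3 τ g k))‖ₑ :=
        enorm_sub_le.trans (add_le_add (enorm_sub_le.trans (add_le_add enorm_sub_le le_rfl)) le_rfl)
    _ ≤ ‖f k - g k‖ₑ + ENNReal.ofReal (√c * τ / 2) * ‖f k - g k‖ₑ
        + ENNReal.ofReal (√c * τ / 2) * 1 * ‖conjSeq (fun k => f k - g k) k‖ₑ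
        + ENNReal.ofReal (1 / 4) * (‖I1 τ f k - I1 τ g k‖ₑ + 2 * ‖I2 τ f k - I2 τ g k‖ₑ
          + ‖I3 τ f k - I3 τ g k‖ₑ) := by
        simp only [enorm_mul, hE', one_mul]
        gcongr
        refine (enorm_add_le _ _).trans (add_le_add ((enorm_add_le _ _).trans_eq ?_) le_rfl)
        rw [enorm_mul, ← ofReal_norm (2 : ℂ)]
        norm_num
    _ = _ := by ring

lemma sobENorm_Phi_sub_le {r c τ : ℝ} (hc : 0 < c) (hτ : 0 ≤ τ) (f g : ℤ → ℂ) :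
    sobENorm r (fun k => ‖Phi c τ f k - Phi c τ g k‖ₑ) ≤ sobENorm r (fun k => ‖f k - g k‖ₑ)
      + ENNReal.ofReal (√c * τ / 2) * (sobENorm r (fun k => ‖f k - g k‖ₑ)
        + sobENorm r (‖conjSeq (fun k => f k - g k) ·‖ₑ))
      + ENNReal.ofReal (1 / 4) * (sobENorm r (fun k => ‖I1 τ f k - I1 τ g k‖ₑ)
        + 2 * sobENorm r (fun k => ‖I2 τ f k - I2 τ g k‖ₑ)
        + sobENorm r (fun k => ‖I3 τ f k - I3 τ g k‖ₑ)) := by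
  refine (sobENorm_mono (enorm_Phi_sub_le hc hτ f g)).trans ?_
  refine (sobENorm_add_le _ _).trans (add_le_add ((sobENorm_add_le _ _).trans
    (add_le_add le_rfl ?_)) ?_) <;> rw [sobENorm_const_mul] <;> gcongr
  · exact sobENorm_add_le _ _
  · refine (sobENorm_add_le _ _).trans (add_le_add ((sobENorm_add_le _ _).trans
      (add_le_add le_rfl ?_)) le_rfl)
    rw [sobENorm_const_mul]

theorem Phi_stability (r c : ℝ) (hr : 1 / 2 < r) (hc : 0 < c) (Dr : ℝ) (hDr : 0 < Dr)
    (hbil : ∀ f g : ℤ → ℂ, inH r f → inH r g →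
      sobNorm r (conv f g) ≤ Dr * sobNorm r f * sobNorm r g)
    (τ : ℝ) (hτ : 0 ≤ τ) (f g : ℤ → ℂ) (hf : inH r f) (hg : inH r g) :
    sobNorm r (fun k => Phi c τ f k - Phi c τ g k)
      ≤ (1 + (Real.sqrt c + Dr * (sobNorm r f + sobNorm r g)) * τ) *
          sobNorm r (fun k => f k - g k) := by
  have hr0 : 0 ≤ r := by linarith
  have hI1 := sobENorm_I1_sub_le hDr.le hbil hτ hr0 hf hg
  have hI2 := sobENorm_I2_sub_le hDr.le hbil hτ hr0 hf hg
  have hI3 := sobENorm_I3_sub_le hDr.le hbil hτ hr0 hf hg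
  rw [sobNorm_eq_toReal_sobENorm]
  set X := sobNorm r (fun k => f k - g k)
  set F := sobNorm r f
  set G := sobNorm r g
  have hX : 0 ≤ X := sobNorm_nonneg _ _
  have hF : 0 ≤ F := sobNorm_nonneg _ _
  have hG : 0 ≤ G := sobNorm_nonneg _ _
  refine ENNReal.toReal_le_of_le_ofReal (by positivity) ((sobENorm_Phi_sub_le hc hτ f g).trans ?_)
  rw [sobENorm_enorm_conjSeq, sobENorm_enorm_eq_ofReal (hf.sub hg)]
  set B := ENNReal.ofReal τ * (ENNReal.ofReal (Dr * X * F) + ENNReal.ofReal (Dr * G * X))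
  calc _ ≤ ENNReal.ofReal X + ENNReal.ofReal (√c * τ / 2) * (ENNReal.ofReal X + ENNReal.ofReal X)
        + ENNReal.ofReal (1 / 4) * (B + 2 * B + B) := by gcongr
    _ = _ := by
      rw [show (1 + (√c + Dr * (F + G)) * τ) * X = X + √c * τ / 2 * (X + X)
        + 1 / 4 * (τ * (Dr * X * F + Dr * G * X) + 2 * (τ * (Dr * X * F + Dr * G * X))
          + τ * (Dr * X * F + Dr * G * X)) by ring]
      simp (disch := positivity) only [B, ENNReal.ofReal_add, ENNReal.ofReal_mul,
        ENNReal.ofReal_ofNat]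
end
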